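/- Let A be a Banach algebra with a Gelfand theory (G, 𝔄), and let I be a closed ideal of A. Let 𝔍 be the intersection of all maximal modular left ideals L of 𝔄 with G(I) ⊆ L. Then 𝔍 is a two-sided closed ideal of 𝔄, and (G|_I, 𝔍) is a Gelfand theory for I. In particular, every closed ideal of a Banach algebra with a Gelfand theory has a Gelfand theory. -/

import Mathlib

/-!
For a two-sided ideal `J`, the maximal modular left ideals of `J` correspond to the maximal
modular left ideals `L` of the whole algebra with `J ⊄ L`, via `L ↦ L ∩ J`; the inverse sends `N`
to `{b | b u ∈ N}` for a modular right identity `u ∈ J` of `N`. Applying this to `𝔍 ⊆ 𝔄` and to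
`I ⊆ A`, and using the bijection `L ↦ G⁻¹(L)` of the Gelfand theory (under which `𝔍 ⊄ L` becomes
`I ⊄ G⁻¹(L)`), gives the bijection for `(G|_I, 𝔍)`.

`𝔍` is a right ideal because the density of `G(A) + L` forces `G(I) 𝔄 ⊆ L`, so that
`{b | b c ∈ L}` again contains `G(I)`. For the density, `closure (G(I) + L)` is a closed subspace
stable under `G(A)`, so its preimage under `G` is everything by maximality of `G⁻¹(L)`; the open
mapping theorem for `𝔍 × L → 𝔄` then moves approximations of `x ∈ 𝔍` from `G(I) + L` into
`G(I) + (L ∩ 𝔍)`.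
-/

open scoped Pointwise

/-- A `ℂ`-submodule `L` of a (possibly non-unital) algebra `A` is a left ideal if it is
closed under left multiplication by arbitrary elements of `A`. -/
def IsLeftIdeal {A : Type*} [NonUnitalNonAssocRing A] [Module ℂ A]
    (L : Submodule ℂ A) : Prop :=
  ∀ a : A, ∀ x ∈ L, a * x ∈ L

/-- A left ideal `L` is modular if there is a right modular identity `u`,
i.e. `a * u - a ∈ L` for all `a`. -/
def IsModularLeft {A : Type*} [NonUnitalNonAssocRing A] [Module ℂ A]
    (L : Submodule ℂ A) : Prop :=
  ∃ u : A, ∀ a : A, a * u - a ∈ L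

/-- `L` is a maximal modular left ideal: a proper modular left ideal which is maximal among
proper left ideals. -/
def IsMaximalModularLeftIdeal {A : Type*} [NonUnitalNonAssocRing A] [Module ℂ A]
    (L : Submodule ℂ A) : Prop :=
  IsLeftIdeal L ∧ IsModularLeft L ∧ L ≠ ⊤ ∧
    ∀ M : Submodule ℂ A, IsLeftIdeal M → M ≠ ⊤ → L ≤ M → M = L

/-- `(G, 𝔄)` is a Gelfand theory for `A`:
(G1) `𝔄` is a C*-algebra and `G : A → 𝔄` is an algebra homomorphism;
(G2) `L ↦ G⁻¹(L)` is a bijection between the maximal modular left ideals of `𝔄` and of `A`;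
(G3) for each maximal modular left ideal `L` of `𝔄`, the induced map `A/G⁻¹(L) → 𝔄/L` has
dense range; equivalently (via the open quotient map `𝔄 → 𝔄/L`), the set `G(A) + L` is
dense in `𝔄`. -/
def IsGelfandTheory {A 𝔄 : Type*}
    [NonUnitalNormedRing A] [NormedSpace ℂ A] [IsScalarTower ℂ A A] [SMulCommClass ℂ A A]
    [NonUnitalNormedRing 𝔄] [StarRing 𝔄] [CStarRing 𝔄] [NormedSpace ℂ 𝔄]
    [IsScalarTower ℂ 𝔄 𝔄] [SMulCommClass ℂ 𝔄 𝔄] [StarModule ℂ 𝔄] [CompleteSpace 𝔄]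
    (G : A →ₙₐ[ℂ] 𝔄) : Prop :=
  Set.BijOn (fun L : Submodule ℂ 𝔄 => L.comap (G : A →ₗ[ℂ] 𝔄))
      {L | IsMaximalModularLeftIdeal L} {L | IsMaximalModularLeftIdeal L} ∧
    ∀ L : Submodule ℂ 𝔄, IsMaximalModularLeftIdeal L →
      Dense (Set.range ⇑G + (L : Set 𝔄))

/-- `L` is a maximal modular left ideal of the algebra `J` (a two-sided ideal of the
ambient algebra, with `L` expressed as a submodule of the ambient algebra contained
in `J`). -/
def IsMaximalModularLeftIdealIn {A : Type*} [NonUnitalNonAssocRing A] [Module ℂ A]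
    (J L : Submodule ℂ A) : Prop :=
  L ≤ J ∧ (∀ a ∈ J, ∀ x ∈ L, a * x ∈ L) ∧ (∃ u ∈ J, ∀ a ∈ J, a * u - a ∈ L) ∧ L ≠ J ∧
    ∀ M : Submodule ℂ A, M ≤ J → (∀ a ∈ J, ∀ x ∈ M, a * x ∈ M) → M ≠ J → L ≤ M → M = L

def IsTwoSidedIdeal {B : Type*} [NonUnitalNonAssocRing B] [Module ℂ B]
    (J : Submodule ℂ B) : Prop :=
  ∀ a : B, ∀ x ∈ J, a * x ∈ J ∧ x * a ∈ J

section LeftIdeals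

variable {B : Type*} [NonUnitalRing B] [Module ℂ B]

lemma IsTwoSidedIdeal.isLeftIdeal {J : Submodule ℂ B} (hJ : IsTwoSidedIdeal J) :
    IsLeftIdeal J :=
  fun a x hx => (hJ a x hx).1

lemma isLeftIdeal_top : IsLeftIdeal (⊤ : Submodule ℂ B) :=
  fun _ _ _ => trivial

lemma IsLeftIdeal.eq_top_of_modular_mem {L : Submodule ℂ B} (hL : IsLeftIdeal L) {u : B}
    (hu : ∀ b, b * u - b ∈ L) (huL : u ∈ L) : L = ⊤ :=
  eq_top_iff.2 fun b _ => by simpa using L.sub_mem (hL b u huL) (hu b)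

lemma IsMaximalModularLeftIdeal.isMaximalModularLeftIdealIn_top {L : Submodule ℂ B}
    (hL : IsMaximalModularLeftIdeal L) : IsMaximalModularLeftIdealIn ⊤ L := by
  obtain ⟨hLl, ⟨u, hu⟩, hLtop, hLmax⟩ := hL
  exact ⟨le_top, fun a _ => hLl a, ⟨u, trivial, fun a _ => hu a⟩, hLtop,
    fun M _ hM => hLmax M fun a => hM a trivial⟩

lemma mul_sub_mem_inf_of_modular {L J : Submodule ℂ B} (hJ : IsLeftIdeal J) {u : B}
    (huJ : u ∈ J) (hu : ∀ b, b * u - b ∈ L) : ∀ a ∈ J, a * u - a ∈ L ⊓ J :=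
  fun a ha => ⟨hu a, J.sub_mem (hJ a u huJ) ha⟩

namespace IsMaximalModularLeftIdealIn

variable {J N : Submodule ℂ B} (hN : IsMaximalModularLeftIdealIn J N)
include hN

lemma exists_mul_not_mem {u : B} (hu : ∀ a ∈ J, a * u - a ∈ N) : ∃ a ∈ J, a * u ∉ N := by
  by_contra! h
  exact hN.2.2.2.1 <| le_antisymm hN.1 fun a ha => by simpa using N.sub_mem (h a ha) (hu a ha)

lemma sup_eq {K : Submodule ℂ B} (hKJ : K ≤ J) (hK : ∀ a ∈ J, ∀ x ∈ K, a * x ∈ N ⊔ K)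
    (hKN : ¬ K ≤ N) : N ⊔ K = J := by
  by_contra h
  refine hKN (le_sup_right.trans (hN.2.2.2.2 _ (sup_le hN.1 hKJ) ?_ h le_sup_left).le)
  intro a ha x hx
  obtain ⟨n, hn, k, hk, rfl⟩ := Submodule.mem_sup.1 hx
  rw [mul_add]
  exact Submodule.add_mem _ (Submodule.mem_sup_left (hN.2.1 a ha n hn)) (hK a ha k hk)

variable [SMulCommClass ℂ B B]

lemma mem_of_forall_mul_mem {j : B} (hj : j ∈ J) (h : ∀ a ∈ J, a * j ∈ N) : j ∈ N := by
  by_contra hjN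
  obtain ⟨u, huJ, hu⟩ := hN.2.2.1
  obtain ⟨a, ha, hau⟩ := hN.exists_mul_not_mem hu
  have hsup : N ⊔ Submodule.span ℂ {j} = J := by
    refine hN.sup_eq ((Submodule.span_singleton_le_iff_mem _ _).2 hj) (fun b hb x hx => ?_)
      (fun h => hjN (h (Submodule.mem_span_singleton_self j)))
    obtain ⟨t, rfl⟩ := Submodule.mem_span_singleton.1 hx
    rw [mul_smul_comm]
    exact Submodule.mem_sup_left (N.smul_mem t (h b hb))
  obtain ⟨n, hn, _, hs, rfl⟩ := Submodule.mem_sup.1 (hsup ▸ huJ : u ∈ N ⊔ Submodule.span ℂ {j})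
  obtain ⟨t, rfl⟩ := Submodule.mem_span_singleton.1 hs
  apply hau
  rw [mul_add, mul_smul_comm]
  exact N.add_mem (hN.2.1 a ha n hn) (N.smul_mem t (h a ha))

lemma isLeftIdeal (hJ : IsTwoSidedIdeal J) : IsLeftIdeal N := by
  intro b n hn
  refine hN.mem_of_forall_mul_mem (hJ.isLeftIdeal b n (hN.1 hn)) fun a ha => ?_
  rw [← mul_assoc]
  exact hN.2.1 (a * b) (hJ b a ha).2 n hn

lemma sub_mem_of_modular {u v : B} (huJ : u ∈ J) (hvJ : v ∈ J)
    (hu : ∀ a ∈ J, a * u - a ∈ N) (hv : ∀ a ∈ J, a * v - a ∈ N) : u - v ∈ N :=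
  hN.mem_of_forall_mul_mem (J.sub_mem huJ hvJ) fun a ha => by
    simpa [mul_sub] using N.sub_mem (hu a ha) (hv a ha)

end IsMaximalModularLeftIdealIn

namespace IsMaximalModularLeftIdeal

variable {L J : Submodule ℂ B} (hL : IsMaximalModularLeftIdeal L)
include hL

lemma sup_eq_top {K : Submodule ℂ B} (hK : IsLeftIdeal K) (hKL : ¬ K ≤ L) : L ⊔ K = ⊤ :=
  hL.isMaximalModularLeftIdealIn_top.sup_eq le_top
    (fun a _ x hx => Submodule.mem_sup_right (hK a x hx)) hKL

lemma exists_modular_mem (hJ : IsLeftIdeal J) (hJL : ¬ J ≤ L) :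
    ∃ u ∈ J, ∀ b, b * u - b ∈ L := by
  obtain ⟨u₀, hu₀⟩ := hL.2.1
  have hu₀J : u₀ ∈ L ⊔ J := by
    rw [hL.sup_eq_top hJ hJL]
    exact Submodule.mem_top
  obtain ⟨l, hl, u, hu, rfl⟩ := Submodule.mem_sup.1 hu₀J
  refine ⟨u, hu, fun b => ?_⟩
  have hbu : b * u - b = (b * (l + u) - b) - b * l := by rw [mul_add]; abel
  rw [hbu]
  exact L.sub_mem (hu₀ b) (hL.1 b l hl)

lemma mem_of_forall_mul_mem [SMulCommClass ℂ B B] {x : B} (h : ∀ a, a * x ∈ L) : x ∈ L :=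
  hL.isMaximalModularLeftIdealIn_top.mem_of_forall_mul_mem trivial fun a _ => h a

end IsMaximalModularLeftIdeal

end LeftIdeals

section Correspondence

variable {B : Type*} [NonUnitalRing B] [Module ℂ B] [IsScalarTower ℂ B B]

lemma IsLeftIdeal.map_mulRight {M : Submodule ℂ B} (hM : IsLeftIdeal M) (c : B) :
    IsLeftIdeal (M.map (LinearMap.mulRight ℂ c)) := by
  rintro a _ ⟨m, hm, rfl⟩
  exact ⟨a * m, hM a m hm, by simp [mul_assoc]⟩

lemma IsLeftIdeal.comap_mulRight {L : Submodule ℂ B} (hL : IsLeftIdeal L) (c : B) :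
    IsLeftIdeal (L.comap (LinearMap.mulRight ℂ c)) := by
  intro a x hx
  simpa [mul_assoc] using hL a _ hx

lemma comap_mulRight_inf_eq_of_modular {L J : Submodule ℂ B} (hJ : IsLeftIdeal J) {u : B}
    (huJ : u ∈ J) (hu : ∀ b, b * u - b ∈ L) : (L ⊓ J).comap (LinearMap.mulRight ℂ u) = L := by
  ext b
  simp only [Submodule.mem_comap, LinearMap.mulRight_apply, Submodule.mem_inf, hJ b u huJ,
    and_true]
  exact ⟨fun h => by simpa using L.sub_mem h (hu b), fun h => by simpa using L.add_mem (hu b) h⟩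

lemma comap_mulRight_eq_of_sub_mem {N : Submodule ℂ B} (hN : IsLeftIdeal N) {u v : B}
    (huv : u - v ∈ N) : N.comap (LinearMap.mulRight ℂ u) = N.comap (LinearMap.mulRight ℂ v) := by
  ext b
  simp only [Submodule.mem_comap, LinearMap.mulRight_apply]
  rw [← N.sub_mem_iff_left (hN b _ huv), mul_sub, sub_sub_cancel]

namespace IsMaximalModularLeftIdealIn

variable {J N : Submodule ℂ B} (hN : IsMaximalModularLeftIdealIn J N)
include hN

/-- Writing `c = n + d c` with `n ∈ N`, the element `b d - b` kills `c` modulo `N`. -/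
lemma exists_modular_mem_of_not_map_mulRight_le (hJ : IsLeftIdeal J) (hNl : IsLeftIdeal N)
    {c : B} (hcJ : c ∈ J) {M : Submodule ℂ B} (hM : IsLeftIdeal M)
    (hMc : ¬ M.map (LinearMap.mulRight ℂ c) ≤ N) :
    ∃ d ∈ M, ∀ b, b * d - b ∈ N.comap (LinearMap.mulRight ℂ c) := by
  have hsup : N ⊔ M.map (LinearMap.mulRight ℂ c) = J := by
    refine hN.sup_eq ?_ (fun a _ x hx => Submodule.mem_sup_right (hM.map_mulRight c a x hx)) hMc
    rintro _ ⟨m, -, rfl⟩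
    exact hJ m c hcJ
  obtain ⟨n, hn, _, ⟨d, hd, rfl⟩, hndc⟩ := Submodule.mem_sup.1 (hsup ▸ hcJ :
    c ∈ N ⊔ M.map (LinearMap.mulRight ℂ c))
  refine ⟨d, hd, fun b => ?_⟩
  have hdc : d * c = c - n := eq_sub_of_add_eq' (by simpa using hndc)
  simpa [sub_mul, mul_assoc, hdc, mul_sub] using N.neg_mem (hNl b n hn)

variable [SMulCommClass ℂ B B]

lemma isMaximalModularLeftIdeal_comap_mulRight (hJ : IsLeftIdeal J) (hNl : IsLeftIdeal N)
    {c : B} (hcJ : c ∈ J) (hcN : c ∉ N) :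
    IsMaximalModularLeftIdeal (N.comap (LinearMap.mulRight ℂ c)) := by
  have hc : ¬ (⊤ : Submodule ℂ B).map (LinearMap.mulRight ℂ c) ≤ N := fun h =>
    hcN <| hN.mem_of_forall_mul_mem hcJ fun a _ => h ⟨a, trivial, rfl⟩
  obtain ⟨d, -, hd⟩ :=
    hN.exists_modular_mem_of_not_map_mulRight_le hJ hNl hcJ isLeftIdeal_top hc
  refine ⟨hNl.comap_mulRight c, ⟨d, hd⟩, fun h => hc ?_, fun M hM hMtop hLM => ?_⟩
  · rintro _ ⟨a, -, rfl⟩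
    exact (h ▸ trivial : a ∈ N.comap (LinearMap.mulRight ℂ c))
  · refine le_antisymm (fun m hm => ?_) hLM
    by_contra hmc
    obtain ⟨d, hdM, hd⟩ := hN.exists_modular_mem_of_not_map_mulRight_le hJ hNl hcJ hM
      fun h => hmc (h ⟨m, hm, rfl⟩)
    exact hMtop (hM.eq_top_of_modular_mem (fun b => hLM (hd b)) hdM)

lemma exists_isMaximalModularLeftIdeal_inf_eq (hJ : IsTwoSidedIdeal J) :
    ∃ L, IsMaximalModularLeftIdeal L ∧ ¬ J ≤ L ∧ L ⊓ J = N := by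
  obtain ⟨u, huJ, hu⟩ := hN.2.2.1
  have huN : u ∉ N := fun h => by
    obtain ⟨a, ha, hau⟩ := hN.exists_mul_not_mem hu
    exact hau (hN.2.1 a ha u h)
  have hLJ : N.comap (LinearMap.mulRight ℂ u) ⊓ J = N := by
    refine le_antisymm ?_ fun n hn => ⟨?_, hN.1 hn⟩
    · rintro b ⟨hbu, hbJ⟩
      simpa using N.sub_mem hbu (hu b hbJ)
    · simpa using N.add_mem (hu n (hN.1 hn)) hn
  refine ⟨_, hN.isMaximalModularLeftIdeal_comap_mulRight hJ.isLeftIdeal (hN.isLeftIdeal hJ) huJ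
    huN, fun h => hN.2.2.2.1 ?_, hLJ⟩
  rw [inf_eq_right.2 h] at hLJ
  exact hLJ.symm

end IsMaximalModularLeftIdealIn

end Correspondence

namespace IsMaximalModularLeftIdeal

variable {B : Type*} [NonUnitalRing B] [Module ℂ B] [IsScalarTower ℂ B B] [SMulCommClass ℂ B B]
variable {L J : Submodule ℂ B} (hL : IsMaximalModularLeftIdeal L)
include hL

lemma comap_mulRight {c : B} (hc : c ∉ L) :
    IsMaximalModularLeftIdeal (L.comap (LinearMap.mulRight ℂ c)) :=
  hL.isMaximalModularLeftIdealIn_top.isMaximalModularLeftIdeal_comap_mulRight isLeftIdeal_top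
    hL.1 trivial hc

lemma inf (hJ : IsTwoSidedIdeal J) (hJL : ¬ J ≤ L) : IsMaximalModularLeftIdealIn J (L ⊓ J) := by
  obtain ⟨u, huJ, hu⟩ := hL.exists_modular_mem hJ.isLeftIdeal hJL
  have hmod := mul_sub_mem_inf_of_modular hJ.isLeftIdeal huJ hu
  refine ⟨inf_le_right, fun a _ x hx => ⟨hL.1 a x hx.1, (hJ a x hx.2).1⟩, ⟨u, huJ, hmod⟩,
    fun h => hJL (inf_eq_right.1 h), fun M hMJ hM hMne hLM => ?_⟩
  refine le_antisymm (fun m hm => ⟨?_, hMJ hm⟩) hLM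
  by_contra hmL
  -- `L + B m = B` gives `u = l + b m`, and then `a u ∈ M` for every `a ∈ J`, so `M = J`
  have hBm : ¬ (⊤ : Submodule ℂ B).map (LinearMap.mulRight ℂ m) ≤ L := fun h =>
    hmL (hL.mem_of_forall_mul_mem fun a => h ⟨a, trivial, rfl⟩)
  have hu' : u ∈ L ⊔ (⊤ : Submodule ℂ B).map (LinearMap.mulRight ℂ m) := by
    rw [hL.sup_eq_top (isLeftIdeal_top.map_mulRight m) hBm]
    exact Submodule.mem_top
  obtain ⟨l, hl, _, ⟨b, -, rfl⟩, hlb⟩ := Submodule.mem_sup.1 hu'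
  refine hMne (le_antisymm hMJ fun a ha => ?_)
  have hau : a * u ∈ M := by
    rw [← hlb, mul_add, LinearMap.mulRight_apply, ← mul_assoc]
    exact M.add_mem (hLM ⟨hL.1 a l hl, (hJ l a ha).2⟩) (hM _ (hJ b a ha).2 m hm)
  simpa using M.sub_mem hau (hLM (hmod a ha))

lemma eq_of_inf_eq (hJ : IsTwoSidedIdeal J) {L' : Submodule ℂ B}
    (hL' : IsMaximalModularLeftIdeal L') (hJL : ¬ J ≤ L) (hJL' : ¬ J ≤ L')
    (h : L ⊓ J = L' ⊓ J) : L = L' := by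
  obtain ⟨u, huJ, hu⟩ := hL.exists_modular_mem hJ.isLeftIdeal hJL
  obtain ⟨v, hvJ, hv⟩ := hL'.exists_modular_mem hJ.isLeftIdeal hJL'
  have hN := hL.inf hJ hJL
  have huv : u - v ∈ L ⊓ J := hN.sub_mem_of_modular huJ hvJ
    (mul_sub_mem_inf_of_modular hJ.isLeftIdeal huJ hu)
    (h ▸ mul_sub_mem_inf_of_modular hJ.isLeftIdeal hvJ hv)
  calc L = (L ⊓ J).comap (LinearMap.mulRight ℂ u) :=
        (comap_mulRight_inf_eq_of_modular hJ.isLeftIdeal huJ hu).symm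
    _ = (L' ⊓ J).comap (LinearMap.mulRight ℂ v) := by
        rw [comap_mulRight_eq_of_sub_mem (hN.isLeftIdeal hJ) huv, h]
    _ = L' := comap_mulRight_inf_eq_of_modular hJ.isLeftIdeal hvJ hv

end IsMaximalModularLeftIdeal

section Normed

lemma isQuasiregular_of_norm_lt_one {𝕜 R : Type*} [NontriviallyNormedField 𝕜] [CompleteSpace 𝕜]
    [NonUnitalNormedRing R] [NormedSpace 𝕜 R] [IsScalarTower 𝕜 R R] [SMulCommClass 𝕜 R R]
    [CompleteSpace R] {a : R} (ha : ‖a‖ < 1) : IsQuasiregular a := by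
  rw [isQuasiregular_iff_isUnit' 𝕜]
  have h : ‖WithLp.toLp 1 ((-a : R) : Unitization 𝕜 R)‖ < 1 := by
    rwa [WithLp.unitization_norm_inr, norm_neg]
  have := (Units.oneSub _ h).isUnit.map (WithLp.unitizationAlgEquiv 𝕜)
  rw [Units.val_oneSub, map_sub, map_one] at this
  simpa [sub_eq_add_neg] using this

variable {R : Type*} [NonUnitalNormedRing R] [NormedSpace ℂ R]

lemma IsLeftIdeal.topologicalClosure {L : Submodule ℂ R} (hL : IsLeftIdeal L) :
    IsLeftIdeal L.topologicalClosure :=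
  fun a _ hx => map_mem_closure (continuous_const_mul a) hx fun y hy => hL a y hy

variable [IsScalarTower ℂ R R] [SMulCommClass ℂ R R] [CompleteSpace R]

lemma IsLeftIdeal.one_le_norm_sub {L : Submodule ℂ R} (hL : IsLeftIdeal L) (hLtop : L ≠ ⊤)
    {u : R} (hu : ∀ b, b * u - b ∈ L) {x : R} (hx : x ∈ L) : 1 ≤ ‖u - x‖ := by
  by_contra! h
  obtain ⟨y, -, hy⟩ := isQuasiregular_iff.1
    (isQuasiregular_of_norm_lt_one (𝕜 := ℂ) (a := -(u - x)) (by rwa [norm_neg]))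
  -- with `y` a quasi-inverse of `x - u`, this writes `u` as an element of `L`
  have hu' : u = x + y * x - (y * u - y) - (-(u - x) + y + y * -(u - x)) := by noncomm_ring
  rw [hy, sub_zero] at hu'
  exact hLtop (hL.eq_top_of_modular_mem hu (hu' ▸ L.sub_mem (L.add_mem hx (hL y x hx)) (hu y)))

lemma IsMaximalModularLeftIdeal.isClosed {L : Submodule ℂ R} (hL : IsMaximalModularLeftIdeal L) :
    IsClosed (L : Set R) := by
  obtain ⟨hLl, ⟨u, hu⟩, hLtop, hLmax⟩ := hL
  have hu_not_mem : u ∉ L.topologicalClosure := fun h => by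
    obtain ⟨x, hx, hux⟩ := Metric.mem_closure_iff.1 h 1 one_pos
    exact (hLl.one_le_norm_sub hLtop hu hx).not_gt (by rwa [← dist_eq_norm])
  rw [← hLmax _ hLl.topologicalClosure (fun h => hu_not_mem (h ▸ Submodule.mem_top))
    L.le_topologicalClosure]
  exact L.isClosed_topologicalClosure

end Normed

lemma Submodule.mem_closure_add_inf {𝕜 E : Type*} [NontriviallyNormedField 𝕜]
    [NormedAddCommGroup E] [NormedSpace 𝕜 E] [CompleteSpace E] {J L : Submodule 𝕜 E}
    (hJ : IsClosed (J : Set E)) (hL : IsClosed (L : Set E)) (hJL : J ⊔ L = ⊤) {S : Set E}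
    (hS : S ⊆ J) {x : E} (hxJ : x ∈ J) (hx : x ∈ closure (S + (L : Set E))) :
    x ∈ closure (S + ((L ⊓ J : Submodule 𝕜 E) : Set E)) := by
  have := hJ.completeSpace_coe
  have := hL.completeSpace_coe
  have hsurj : Function.Surjective (J.subtypeL.coprod L.subtypeL) := fun z => by
    obtain ⟨j, hj, l, hl, rfl⟩ := Submodule.mem_sup.1 (hJL ▸ Submodule.mem_top : z ∈ J ⊔ L)
    exact ⟨(⟨j, hj⟩, ⟨l, hl⟩), rfl⟩
  -- open mapping: a small `z` splits as `j + l'` with `j ∈ J` small, and `x - j ∈ S + (L ∩ J)`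
  obtain ⟨C, hC, hpre⟩ := ContinuousLinearMap.exists_preimage_norm_le _ hsurj
  rw [Metric.mem_closure_iff] at hx ⊢
  intro ε hε
  obtain ⟨_, ⟨s, hs, l, hl, rfl⟩, hxsl⟩ := hx (ε / C) (div_pos hε hC)
  obtain ⟨⟨j, l'⟩, hjl, hnorm⟩ := hpre (x - (s + l))
  have hj : (j : E) = x - (s + l) - l' := eq_sub_of_add_eq hjl
  refine ⟨s + (l + l'), Set.add_mem_add hs ⟨L.add_mem hl l'.2, ?_⟩, ?_⟩
  · have hll' : l + l' = x - s - j := by rw [hj]; abel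
    rw [hll']
    exact J.sub_mem (J.sub_mem hxJ (hS hs)) j.2
  · calc dist x (s + (l + l')) = ‖j‖ := by rw [dist_eq_norm, Submodule.coe_norm, hj]; congr 1; abel
      _ ≤ ‖(j, l')‖ := norm_fst_le (j, l')
      _ ≤ C * ‖x - (s + l)‖ := hnorm
      _ < C * (ε / C) := by gcongr; rwa [← dist_eq_norm]
      _ = ε := mul_div_cancel₀ _ hC.ne'

section KernelOfHull

variable {A 𝔄 : Type*} [NonUnitalRing A] [Module ℂ A] [NonUnitalRing 𝔄] [Module ℂ 𝔄]

def kernelOfHull (G : A →ₙₐ[ℂ] 𝔄) (I : Submodule ℂ A) : Submodule ℂ 𝔄 :=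
  sInf {L : Submodule ℂ 𝔄 | IsMaximalModularLeftIdeal L ∧ ∀ x ∈ I, G x ∈ L}

variable {G : A →ₙₐ[ℂ] 𝔄} {I : Submodule ℂ A}

lemma map_mem_kernelOfHull {x : A} (hx : x ∈ I) : G x ∈ kernelOfHull G I :=
  Submodule.mem_sInf.2 fun _ hL => hL.2 x hx

lemma kernelOfHull_le_iff {L : Submodule ℂ 𝔄} (hL : IsMaximalModularLeftIdeal L) :
    kernelOfHull G I ≤ L ↔ I ≤ L.comap (G : A →ₗ[ℂ] 𝔄) :=
  ⟨fun h _ hx => h (map_mem_kernelOfHull hx), fun h => sInf_le ⟨hL, fun _ hx => h hx⟩⟩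

lemma comap_inf_kernelOfHull_inf (L : Submodule ℂ 𝔄) :
    (L ⊓ kernelOfHull G I).comap (G : A →ₗ[ℂ] 𝔄) ⊓ I = L.comap (G : A →ₗ[ℂ] 𝔄) ⊓ I := by
  have hI : I ≤ (kernelOfHull G I).comap (G : A →ₗ[ℂ] 𝔄) := fun _ hx => map_mem_kernelOfHull hx
  rw [Submodule.comap_inf, inf_assoc, inf_eq_right.2 hI]

end KernelOfHull

section DenseRange

variable {A 𝔄 : Type*} [NonUnitalRing A] [Module ℂ A] [NonUnitalNormedRing 𝔄] [NormedSpace ℂ 𝔄]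
  {G : A →ₙₐ[ℂ] 𝔄} {I : Submodule ℂ A}

lemma topologicalClosure_map_sup_eq_top
    (hGm : Set.MapsTo (fun L : Submodule ℂ 𝔄 => L.comap (G : A →ₗ[ℂ] 𝔄))
      {L | IsMaximalModularLeftIdeal L} {L | IsMaximalModularLeftIdeal L})
    (hGd : ∀ L : Submodule ℂ 𝔄, IsMaximalModularLeftIdeal L → Dense (Set.range G + (L : Set 𝔄)))
    (hI : IsLeftIdeal I) {L : Submodule ℂ 𝔄} (hL : IsMaximalModularLeftIdeal L)
    (hIL : ¬ I ≤ L.comap (G : A →ₗ[ℂ] 𝔄)) :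
    (I.map (G : A →ₗ[ℂ] 𝔄) ⊔ L).topologicalClosure = ⊤ := by
  set E := (I.map (G : A →ₗ[ℂ] 𝔄) ⊔ L).topologicalClosure
  have hLE : L ≤ E := le_sup_right.trans (Submodule.le_topologicalClosure _)
  have hEl : IsLeftIdeal (E.comap (G : A →ₗ[ℂ] 𝔄)) := by
    intro a x hx
    show G (a * x) ∈ E
    rw [map_mul]
    refine map_mem_closure (continuous_const_mul (G a)) hx fun y hy => ?_
    obtain ⟨_, ⟨i, hi, rfl⟩, l, hl, rfl⟩ := Submodule.mem_sup.1 hy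
    rw [mul_add]
    exact Submodule.add_mem_sup ⟨a * i, hI a i hi, map_mul G a i⟩ (hL.1 _ l hl)
  have hEtop : E.comap (G : A →ₗ[ℂ] 𝔄) = ⊤ := by
    by_contra hne
    refine hIL fun x hx => ?_
    have hM : IsMaximalModularLeftIdeal (L.comap (G : A →ₗ[ℂ] 𝔄)) := hGm hL
    rw [← hM.2.2.2 _ hEl hne (Submodule.comap_mono hLE)]
    exact Submodule.le_topologicalClosure _ (Submodule.mem_sup_left ⟨x, hx, rfl⟩)
  refine eq_top_iff.2 fun z _ =>
    closure_minimal ?_ (Submodule.isClosed_topologicalClosure _) (hGd L hL z)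
  rintro _ ⟨_, ⟨a, rfl⟩, l, hl, rfl⟩
  exact E.add_mem (hEtop ▸ Submodule.mem_top : a ∈ E.comap (G : A →ₗ[ℂ] 𝔄)) (hLE hl)

variable [IsScalarTower ℂ 𝔄 𝔄] [SMulCommClass ℂ 𝔄 𝔄] [CompleteSpace 𝔄]

lemma isClosed_kernelOfHull : IsClosed (kernelOfHull G I : Set 𝔄) := by
  rw [kernelOfHull, Submodule.coe_sInf]
  exact isClosed_biInter fun L hL => hL.1.isClosed

lemma mul_mem_of_dense_range_add (hI : IsTwoSidedIdeal I) {L : Submodule ℂ 𝔄}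
    (hL : IsMaximalModularLeftIdeal L) (hGL : Dense (Set.range G + (L : Set 𝔄)))
    (hIL : ∀ x ∈ I, G x ∈ L) {x : A} (hx : x ∈ I) (b : 𝔄) : G x * b ∈ L := by
  refine hL.isClosed.closure_subset (map_mem_closure (continuous_const_mul (G x)) (hGL b) ?_)
  rintro _ ⟨_, ⟨a, rfl⟩, l, hl, rfl⟩
  rw [mul_add, ← map_mul]
  exact L.add_mem (hIL _ (hI a x hx).2) (hL.1 _ l hl)

variable
  (hGd : ∀ L : Submodule ℂ 𝔄, IsMaximalModularLeftIdeal L → Dense (Set.range G + (L : Set 𝔄)))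
include hGd

lemma isTwoSidedIdeal_kernelOfHull (hI : IsTwoSidedIdeal I) :
    IsTwoSidedIdeal (kernelOfHull G I) := by
  intro b x hx
  refine ⟨Submodule.mem_sInf.2 fun L hL => hL.1.1 b x (Submodule.mem_sInf.1 hx L hL),
    Submodule.mem_sInf.2 fun L hL => ?_⟩
  by_cases hbL : b ∈ L
  · exact hL.1.1 x b hbL
  · exact Submodule.mem_sInf.1 hx _
      ⟨hL.1.comap_mulRight hbL, fun _ hi =>
        mul_mem_of_dense_range_add hI hL.1 (hGd L hL.1) hL.2 hi b⟩

lemma subset_closure_image_add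
    (hGm : Set.MapsTo (fun L : Submodule ℂ 𝔄 => L.comap (G : A →ₗ[ℂ] 𝔄))
      {L | IsMaximalModularLeftIdeal L} {L | IsMaximalModularLeftIdeal L})
    (hI : IsTwoSidedIdeal I) {N : Submodule ℂ 𝔄}
    (hN : IsMaximalModularLeftIdealIn (kernelOfHull G I) N) :
    (kernelOfHull G I : Set 𝔄) ⊆ closure (⇑G '' (I : Set A) + (N : Set 𝔄)) := by
  have hJ := isTwoSidedIdeal_kernelOfHull hGd hI
  obtain ⟨L, hL, hJL, rfl⟩ := hN.exists_isMaximalModularLeftIdeal_inf_eq hJ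
  have hdense := topologicalClosure_map_sup_eq_top hGm hGd hI.isLeftIdeal hL
    (mt (kernelOfHull_le_iff hL).2 hJL)
  intro x hx
  refine Submodule.mem_closure_add_inf isClosed_kernelOfHull hL.isClosed ?_
    (by rintro _ ⟨i, hi, rfl⟩; exact map_mem_kernelOfHull hi) hx ?_
  · rw [sup_comm]
    exact hL.sup_eq_top hJ.isLeftIdeal hJL
  · have hx' : x ∈ ((I.map (G : A →ₗ[ℂ] 𝔄) ⊔ L).topologicalClosure : Set 𝔄) := by
      rw [hdense]
      trivial
    rwa [Submodule.topologicalClosure_coe, Submodule.coe_sup, Submodule.map_coe] at hx'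

lemma bijOn_comap_inf [IsScalarTower ℂ A A] [SMulCommClass ℂ A A]
    (hGb : Set.BijOn (fun L : Submodule ℂ 𝔄 => L.comap (G : A →ₗ[ℂ] 𝔄))
      {L | IsMaximalModularLeftIdeal L} {L | IsMaximalModularLeftIdeal L})
    (hI : IsTwoSidedIdeal I) :
    Set.BijOn (fun L : Submodule ℂ 𝔄 => L.comap (G : A →ₗ[ℂ] 𝔄) ⊓ I)
      {L | IsMaximalModularLeftIdealIn (kernelOfHull G I) L}
      {M | IsMaximalModularLeftIdealIn I M} := by
  have hJ := isTwoSidedIdeal_kernelOfHull hGd hI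
  have hM {L : Submodule ℂ 𝔄} (hL : IsMaximalModularLeftIdeal L) :
      IsMaximalModularLeftIdeal (L.comap (G : A →ₗ[ℂ] 𝔄)) :=
    hGb.mapsTo hL
  have hIL {L : Submodule ℂ 𝔄} (hL : IsMaximalModularLeftIdeal L) :
      ¬ kernelOfHull G I ≤ L → ¬ I ≤ L.comap (G : A →ₗ[ℂ] 𝔄) :=
    mt (kernelOfHull_le_iff hL).2
  refine ⟨fun N hN => ?_, fun N₁ hN₁ N₂ hN₂ h => ?_, fun P hP => ?_⟩
  · obtain ⟨L, hL, hJL, rfl⟩ := hN.exists_isMaximalModularLeftIdeal_inf_eq hJ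
    show IsMaximalModularLeftIdealIn I ((L ⊓ kernelOfHull G I).comap (G : A →ₗ[ℂ] 𝔄) ⊓ I)
    rw [comap_inf_kernelOfHull_inf]
    exact (hM hL).inf hI (hIL hL hJL)
  · obtain ⟨L₁, hL₁, hJL₁, rfl⟩ := hN₁.exists_isMaximalModularLeftIdeal_inf_eq hJ
    obtain ⟨L₂, hL₂, hJL₂, rfl⟩ := hN₂.exists_isMaximalModularLeftIdeal_inf_eq hJ
    simp only [comap_inf_kernelOfHull_inf] at h
    rw [hGb.injOn hL₁ hL₂ ((hM hL₁).eq_of_inf_eq hI (hM hL₂) (hIL hL₁ hJL₁) (hIL hL₂ hJL₂) h)]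
  · obtain ⟨M, hM, hIM, rfl⟩ := hP.exists_isMaximalModularLeftIdeal_inf_eq hI
    obtain ⟨L, hL, rfl⟩ := hGb.surjOn hM
    have hJL : ¬ kernelOfHull G I ≤ L := mt (kernelOfHull_le_iff hL).1 hIM
    exact ⟨L ⊓ kernelOfHull G I, hL.inf hJ hJL, comap_inf_kernelOfHull_inf L⟩

end DenseRange

theorem stmt_14_general {A 𝔄 : Type*}
    [NonUnitalNormedRing A] [NormedSpace ℂ A] [IsScalarTower ℂ A A] [SMulCommClass ℂ A A]
    [NonUnitalNormedRing 𝔄] [StarRing 𝔄] [CStarRing 𝔄] [NormedSpace ℂ 𝔄]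
    [IsScalarTower ℂ 𝔄 𝔄] [SMulCommClass ℂ 𝔄 𝔄] [StarModule ℂ 𝔄] [CompleteSpace 𝔄]
    (G : A →ₙₐ[ℂ] 𝔄) (hG : IsGelfandTheory G)
    (I : Submodule ℂ A) (hI : ∀ a : A, ∀ x ∈ I, a * x ∈ I ∧ x * a ∈ I) :
    letI 𝔍 : Submodule ℂ 𝔄 :=
      sInf {L : Submodule ℂ 𝔄 | IsMaximalModularLeftIdeal L ∧ ∀ x ∈ I, G x ∈ L}
    (∀ a : 𝔄, ∀ x ∈ 𝔍, a * x ∈ 𝔍 ∧ x * a ∈ 𝔍) ∧ IsClosed (𝔍 : Set 𝔄) ∧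
      (∀ x ∈ I, G x ∈ 𝔍) ∧
      Set.BijOn (fun L : Submodule ℂ 𝔄 => Submodule.comap (G : A →ₗ[ℂ] 𝔄) L ⊓ I)
        {L | IsMaximalModularLeftIdealIn 𝔍 L} {M | IsMaximalModularLeftIdealIn I M} ∧
      ∀ L : Submodule ℂ 𝔄, IsMaximalModularLeftIdealIn 𝔍 L →
        (𝔍 : Set 𝔄) ⊆ closure (⇑G '' (I : Set A) + (L : Set 𝔄)) :=
  ⟨isTwoSidedIdeal_kernelOfHull hG.2 hI, isClosed_kernelOfHull, fun _ => map_mem_kernelOfHull,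
    bijOn_comap_inf hG.2 hG.1 hI, fun _ => subset_closure_image_add hG.2 hG.1.mapsTo hI⟩

/-- Let `(G, 𝔄)` be a Gelfand theory for the Banach algebra `A`, let `I` be a closed
(two-sided) ideal of `A`, and let `𝔍` be the intersection of all maximal modular left
ideals `L` of `𝔄` with `G(I) ⊆ L`. Then `𝔍` is a closed two-sided ideal of `𝔄`,
`G` maps `I` into `𝔍`, and `(G|_I, 𝔍)` is a Gelfand theory for `I`:
`L ↦ G⁻¹(L) ∩ I` is a bijection between the maximal modular left ideals of `𝔍` and those
of `I`, and for each maximal modular left ideal `L` of `𝔍` the induced map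
`I/(G|_I)⁻¹(L) → 𝔍/L` has dense range (equivalently, `𝔍 ⊆ closure (G(I) + L)`). -/
theorem stmt_14 {A 𝔄 : Type*}
    [NonUnitalNormedRing A] [NormedSpace ℂ A] [IsScalarTower ℂ A A] [SMulCommClass ℂ A A]
    [CompleteSpace A]
    [NonUnitalNormedRing 𝔄] [StarRing 𝔄] [CStarRing 𝔄] [NormedSpace ℂ 𝔄]
    [IsScalarTower ℂ 𝔄 𝔄] [SMulCommClass ℂ 𝔄 𝔄] [StarModule ℂ 𝔄] [CompleteSpace 𝔄]
    (G : A →ₙₐ[ℂ] 𝔄) (hG : IsGelfandTheory G)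
    (I : Submodule ℂ A) (hI : ∀ a : A, ∀ x ∈ I, a * x ∈ I ∧ x * a ∈ I)
    (hIc : IsClosed (I : Set A)) :
    letI 𝔍 : Submodule ℂ 𝔄 :=
      sInf {L : Submodule ℂ 𝔄 | IsMaximalModularLeftIdeal L ∧ ∀ x ∈ I, G x ∈ L}
    (∀ a : 𝔄, ∀ x ∈ 𝔍, a * x ∈ 𝔍 ∧ x * a ∈ 𝔍) ∧ IsClosed (𝔍 : Set 𝔄) ∧
      (∀ x ∈ I, G x ∈ 𝔍) ∧
      Set.BijOn (fun L : Submodule ℂ 𝔄 => Submodule.comap (G : A →ₗ[ℂ] 𝔄) L ⊓ I)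
        {L | IsMaximalModularLeftIdealIn 𝔍 L} {M | IsMaximalModularLeftIdealIn I M} ∧
      ∀ L : Submodule ℂ 𝔄, IsMaximalModularLeftIdealIn 𝔍 L →
        (𝔍 : Set 𝔄) ⊆ closure (⇑G '' (I : Set A) + (L : Set 𝔄)) :=
  stmt_14_general G hG I hI
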